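/- arXiv:1707.06095 — 3 statements merged into one kernel-verified Lean document; each statement's English description precedes it below -/
import Mathlib

section
/- There is no continuous map F : S¹ × S¹ → S¹ on the unit circle S¹ ⊆ ℝ² that is unanimous (F(p,p) = p for all p) and anonymous (F(p,q) = F(q,p) for all p, q). In other words, there is no social choice function for 2 agents on the circle. -/
/-!
Identify the circle with `AddCircle T` and lift `(x, y) ↦ F (x, y)` through the covering
`ℝ → AddCircle T` to a continuous `g : ℝ × ℝ → ℝ` with `g 0 = 0`. Uniqueness of lifts turns the
axioms of `F` into identities for `g`: unanimity gives `g (t, t) = t`, anonymity gives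
`g (x, y) = g (y, x)`, and since `F (T, 0) = F (0, 0) = 0`, translating the first coordinate by
`T` adds the constant `c = g (T, 0) ∈ Tℤ`. Hence `T = g (T, T) = g (0, T) + c = 2c`, so `T` would
be an even multiple of itself.
-/

open Metric Real

structure IsSocialChoiceFunction {X : Type*} [TopologicalSpace X] (F : X × X → X) : Prop where
  continuous : Continuous F
  anonymous : ∀ p q, F (p, q) = F (q, p)
  unanimous : ∀ p, F (p, p) = p

theorem IsSocialChoiceFunction.homeomorph_conj {X Y : Type*} [TopologicalSpace X]
    [TopologicalSpace Y] {F : X × X → X} (hF : IsSocialChoiceFunction F) (e : X ≃ₜ Y) :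
    IsSocialChoiceFunction fun y : Y × Y ↦ e (F (e.symm y.1, e.symm y.2)) where
  continuous := e.continuous.comp (hF.continuous.comp (by fun_prop))
  anonymous _ _ := congrArg e (hF.anonymous _ _)
  unanimous _ := by simp only [hF.unanimous, e.apply_symm_apply]

noncomputable def EuclideanSpace.sphereHomeomorphCircle :
    sphere (0 : EuclideanSpace ℝ (Fin 2)) 1 ≃ₜ Circle :=
  Complex.orthonormalBasisOneI.repr.toHomeomorph.symm.subtype fun x ↦ by
    show x ∈ sphere 0 1 ↔ Complex.orthonormalBasisOneI.repr.symm x ∈ sphere (0 : ℂ) 1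
    simp only [mem_sphere_zero_iff_norm, LinearIsometryEquiv.norm_map]

namespace IsSocialChoiceFunction

open AddCircle

variable {T : ℝ} {F : AddCircle T × AddCircle T → AddCircle T}

theorem lift_apply_diag (hF : IsSocialChoiceFunction F) {g : C(ℝ × ℝ, ℝ)} (hg0 : g 0 = 0)
    (hgF : ∀ x, (g x : AddCircle T) = F (x.1, x.2)) (t : ℝ) : g (t, t) = t :=
  congrFun ((isCoveringMap_coe T).eq_of_comp_eq (g₁ := fun t ↦ g (t, t)) (g₂ := id)
    (by fun_prop) continuous_id (funext fun t ↦ by simp [hgF, hF.unanimous]) 0 hg0) t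

theorem lift_apply_swap (hF : IsSocialChoiceFunction F) {g : C(ℝ × ℝ, ℝ)} (hg0 : g 0 = 0)
    (hgF : ∀ x, (g x : AddCircle T) = F (x.1, x.2)) (x y : ℝ) : g (y, x) = g (x, y) :=
  congrFun ((isCoveringMap_coe T).eq_of_comp_eq (g₁ := g ∘ Prod.swap) (g₂ := g)
    (by fun_prop) g.continuous (funext fun x ↦ by simp [hgF, hF.anonymous]) 0
    (by simp [hg0])) (x, y)

theorem lift_apply_add_period (hF : IsSocialChoiceFunction F) {g : C(ℝ × ℝ, ℝ)}
    (hg0 : g 0 = 0) (hgF : ∀ x, (g x : AddCircle T) = F (x.1, x.2)) (x y : ℝ) :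
    g (x + T, y) = g (x, y) + g (T, 0) := by
  refine congrFun ((isCoveringMap_coe T).eq_of_comp_eq (g₁ := fun x ↦ g (x.1 + T, x.2))
    (g₂ := fun x ↦ g x + g (T, 0)) (by fun_prop) (by fun_prop) (funext fun x ↦ ?_) 0
    (by simp [hg0])) (x, y)
  simp only [Function.comp_apply, coe_add, hgF, coe_period, coe_zero, add_zero,
    hF.unanimous 0]

end IsSocialChoiceFunction

namespace AddCircle

theorem not_isSocialChoiceFunction {T : ℝ} {F : AddCircle T × AddCircle T → AddCircle T}
    (hT : T ≠ 0) : ¬ IsSocialChoiceFunction F := by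
  intro hF
  obtain ⟨g, hg0, hgF⟩ := ((isCoveringMap_coe T).existsUnique_continuousMap_lifts
    ⟨fun x : ℝ × ℝ ↦ F (x.1, x.2), hF.continuous.comp (by fun_prop)⟩ 0 0
    (by simp [hF.unanimous])).exists
  have hlift : ∀ x, (g x : AddCircle T) = F (x.1, x.2) := congrFun hgF
  have hT_eq : T = 2 * g (T, 0) := calc
    T = g (0 + T, T) := by rw [zero_add, hF.lift_apply_diag hg0 hlift]
    _ = g (T, 0) + g (T, 0) := by
      rw [hF.lift_apply_add_period hg0 hlift, hF.lift_apply_swap hg0 hlift]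
    _ = 2 * g (T, 0) := by ring
  obtain ⟨n, hn⟩ := (coe_eq_zero_iff T).1
    (by rw [hlift, coe_period, coe_zero, hF.unanimous] : (g (T, 0) : AddCircle T) = 0)
  rw [← hn, zsmul_eq_mul] at hT_eq
  have h_real : (1 : ℝ) = 2 * n := mul_right_cancel₀ hT (by linarith)
  have h_int : (1 : ℤ) = 2 * n := by exact_mod_cast h_real
  omega

end AddCircle

/-- There is no 2-agent social choice function on the unit circle S¹ ⊆ ℝ²:
no continuous F : S¹ × S¹ → S¹ that is anonymous (F(p,q) = F(q,p)) and
unanimous (F(p,p) = p). -/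
theorem stmt_3 :
    ¬ ∃ F : (Metric.sphere (0 : EuclideanSpace ℝ (Fin 2)) 1) ×
            (Metric.sphere (0 : EuclideanSpace ℝ (Fin 2)) 1) →
            (Metric.sphere (0 : EuclideanSpace ℝ (Fin 2)) 1),
      Continuous F ∧
      (∀ p q, F (p, q) = F (q, p)) ∧
      (∀ p, F (p, p) = p) := by
  rintro ⟨F, hcont, hanon, hunan⟩
  exact AddCircle.not_isSocialChoiceFunction two_pi_pos.ne'
    ((⟨hcont, hanon, hunan⟩ : IsSocialChoiceFunction F).homeomorph_conj
      (EuclideanSpace.sphereHomeomorphCircle.trans AddCircle.homeomorphCircle'.symm))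
end

section
/- Let φ : Y × ℝ → Y be a continuous flow on a compact space Y, let A ⊆ Y be open and positively invariant (φ(A × [0,∞)) ⊆ A), and suppose that for every q ∈ Y there exists t_q ≥ 0 with φ(q, t_q) ∈ A. Then there exists T ≥ 0 such that φ(q, t) ∈ A for all q ∈ Y and all t ≥ T. -/
/-- Uniform attraction: if A is open and positively invariant under a continuous flow φ
on a compact space Y, and every point eventually enters A, then there is a uniform time T
after which every trajectory stays in A. -/
theorem stmt_14 {Y : Type*} [TopologicalSpace Y] [CompactSpace Y]
    (φ : Y → ℝ → Y) (hφcont : Continuous fun z : Y × ℝ => φ z.1 z.2)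
    (hφ0 : ∀ p, φ p 0 = p) (hφadd : ∀ p s t, φ (φ p s) t = φ p (s + t))
    (A : Set Y) (hAopen : IsOpen A)
    (hAinv : ∀ p ∈ A, ∀ t : ℝ, 0 ≤ t → φ p t ∈ A)
    (hattr : ∀ q : Y, ∃ t : ℝ, 0 ≤ t ∧ φ q t ∈ A) :
    ∃ T : ℝ, 0 ≤ T ∧ ∀ (q : Y) (t : ℝ), T ≤ t → φ q t ∈ A := by
  choose τ hτ0 hτA using hattr
  set U : Y → Set Y := fun q => (fun p => φ p (τ q)) ⁻¹' A with hU
  have hUopen : ∀ q, IsOpen (U q) := fun q =>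
    hAopen.preimage (hφcont.comp (Continuous.prodMk continuous_id (continuous_const)))
  have hcover : Set.univ ⊆ ⋃ q, U q := fun p _ =>
    Set.mem_iUnion.mpr ⟨p, hτA p⟩
  obtain ⟨s, hs⟩ := isCompact_univ.elim_finite_subcover U hUopen hcover
  rcases s.eq_empty_or_nonempty with rfl | hne
  · refine ⟨0, le_rfl, fun q t ht => ?_⟩
    have := hs (Set.mem_univ q)
    simp at this
  · refine ⟨s.sup' hne τ, ?_, fun q t ht => ?_⟩
    · obtain ⟨q, hq⟩ := hne
      exact le_trans (hτ0 q) (Finset.le_sup' τ hq)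
    · obtain ⟨i, hi, hqi⟩ := Set.mem_iUnion₂.mp (hs (Set.mem_univ q))
      have hτi : τ i ≤ t := le_trans (Finset.le_sup' τ hi) ht
      have := hAinv _ hqi (t - τ i) (by linarith)
      rw [hφadd] at this
      simpa [add_sub_cancel] using this
end

section
/- Let f : ℝⁿ → ℝ be smooth (C^∞). Then the set of vectors a = (a₁,…,a_n) ∈ ℝⁿ for which the function x ↦ f(x) − a·x has at least one degenerate critical point (a point where the gradient of f − a·x vanishes and the Hessian of f is singular) has Lebesgue measure zero in ℝⁿ. -/
open MeasureTheory

/-- Sard-type statement: for a smooth f : ℝⁿ → ℝ, the set of vectors a such that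
x ↦ f(x) − a·x has a degenerate critical point (∇f(x) = a with singular Hessian of f)
has Lebesgue measure zero. -/
theorem stmt_16 (n : ℕ) (f : EuclideanSpace ℝ (Fin n) → ℝ) (hf : ContDiff ℝ (⊤ : ℕ∞) f) :
    volume {a : EuclideanSpace ℝ (Fin n) |
      ∃ x : EuclideanSpace ℝ (Fin n),
        gradient f x = a ∧ ¬ Function.Bijective (fderiv ℝ (gradient f) x)} = 0 := by
  set g : EuclideanSpace ℝ (Fin n) → EuclideanSpace ℝ (Fin n) := gradient f with hg
  have hgd : Differentiable ℝ g := by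
    have h1 : ContDiff ℝ 1 (fderiv ℝ f) := hf.fderiv_right (by exact (WithTop.coe_le_coe (b := ((1 + 1 : ℕ) : ℕ∞)) (a := ⊤)).mpr le_top)
    have he : g = fun x =>
        (InnerProductSpace.toDual ℝ (EuclideanSpace ℝ (Fin n))).symm (fderiv ℝ f x) := rfl
    rw [he]
    exact (InnerProductSpace.toDual ℝ
      (EuclideanSpace ℝ (Fin n))).symm.toContinuousLinearEquiv.differentiable.comp
      (h1.differentiable one_ne_zero)
  set s : Set (EuclideanSpace ℝ (Fin n)) :=
    {x | ¬ Function.Bijective (fderiv ℝ g x)} with hs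
  have hsub : {a : EuclideanSpace ℝ (Fin n) | ∃ x : EuclideanSpace ℝ (Fin n),
      gradient f x = a ∧ ¬ Function.Bijective (fderiv ℝ (gradient f) x)} ⊆ g '' s := by
    rintro a ⟨x, hx1, hx2⟩
    exact ⟨x, hx2, hx1⟩
  refine measure_mono_null hsub ?_
  apply addHaar_image_eq_zero_of_det_fderivWithin_eq_zero volume
    (f' := fun x => fderiv ℝ g x)
  · intro x _
    exact ((hgd x).hasFDerivAt).hasFDerivWithinAt
  · intro x hx
    by_contra hdet
    apply hx
    have : Function.Bijective ((fderiv ℝ g x).toLinearMap.equivOfDetNeZero hdet) :=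
      ((fderiv ℝ g x).toLinearMap.equivOfDetNeZero hdet).bijective
    exact this
end
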